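/- arXiv:2301.00433 — 2 statements merged into one kernel-verified Lean document; each statement's English description precedes it below -/
import Mathlib

section
/- Let β : Fin N → ℝ be a sequence of nonnegative scores sorted in descending order (β i ≥ β j whenever i ≤ j), and let ξ ∈ ℝ. Suppose k ≤ N is the smallest index such that Σ_{i < k} β i ≥ ξ (i.e., Σ_{i < k} β i ≥ ξ and Σ_{i < m} β i < ξ for every m < k). Then every subset S of Fin N with Σ_{i ∈ S} β i ≥ ξ satisfies |S| ≥ k. In other words, the greedy selection of Algorithm 1, which takes semantic triples in descending score order until the estimated semantic similarity reaches ξ, transmits the minimum possible number of semantic triples among all selections meeting the similarity threshold. -/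
/-- Any strictly monotone map `Fin m → Fin N` satisfies `j ≤ f j` (as naturals). -/
lemma aux_le_apply {m N : ℕ} (f : Fin m → Fin N) (hf : StrictMono f) :
    ∀ n (h : n < m), n ≤ (f ⟨n, h⟩ : ℕ) := by
  intro n
  induction n with
  | zero => intro h; exact Nat.zero_le _
  | succ n ih =>
    intro h
    have h' : n < m := Nat.lt_of_succ_lt h
    have hlt : f ⟨n, h'⟩ < f ⟨n + 1, h⟩ := hf (by simp [Fin.lt_def])
    have := ih h'
    have hlt' : ((f ⟨n, h'⟩ : Fin N) : ℕ) < ((f ⟨n + 1, h⟩ : Fin N) : ℕ) := hlt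
    omega

/-- The sum of `β` over any set `S` of size `m` is at most the sum over the first `m`
indices, when `β` is nonincreasing. -/
lemma aux_top_sum {N : ℕ} (β : Fin N → ℝ)
    (hsorted : ∀ i j : Fin N, i ≤ j → β j ≤ β i)
    (S : Finset (Fin N)) {m : ℕ} (hS : S.card = m) (hm : m ≤ N) :
    ∑ i ∈ S, β i ≤ ∑ i ∈ Finset.univ.filter (fun i : Fin N => (i : ℕ) < m), β i := by
  set e := S.orderIsoOfFin hS with he
  have hmono : StrictMono (fun j : Fin m => (e j : Fin N)) := by
    intro a b hab
    exact_mod_cast e.strictMono hab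
  have hle : ∀ j : Fin m, (j : ℕ) ≤ ((e j : Fin N) : ℕ) := fun j =>
    aux_le_apply _ hmono j j.isLt
  have h1 : ∑ i ∈ S, β i = ∑ j : Fin m, β (e j) := by
    rw [← Finset.sum_attach S β]
    exact (Equiv.sum_comp e.toEquiv (fun x => β x)).symm
  have h2 : ∑ i ∈ Finset.univ.filter (fun i : Fin N => (i : ℕ) < m), β i
      = ∑ j : Fin m, β (Fin.castLE hm j) := by
    have hset : Finset.univ.filter (fun i : Fin N => (i : ℕ) < m)
        = Finset.image (Fin.castLE hm) Finset.univ := by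
      ext i
      simp only [Finset.mem_filter, Finset.mem_univ, true_and, Finset.mem_image,
        Fin.ext_iff, Fin.coe_castLE]
      constructor
      · intro hi; exact ⟨⟨(i : ℕ), hi⟩, rfl⟩
      · rintro ⟨j, hj⟩; omega
    rw [hset, Finset.sum_image (fun a _ b _ h => Fin.castLE_injective hm h)]
  rw [h1, h2]
  apply Finset.sum_le_sum
  intro j _
  apply hsorted
  exact hle j

theorem greedy_triple_selection_minimal
    (N : ℕ) (β : Fin N → ℝ) (hβ0 : ∀ i, 0 ≤ β i)
    (hsorted : ∀ i j : Fin N, i ≤ j → β j ≤ β i)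
    (ξ : ℝ) (k : ℕ) (hkN : k ≤ N)
    (hk : ξ ≤ ∑ i ∈ Finset.univ.filter (fun i : Fin N => (i : ℕ) < k), β i)
    (hmin : ∀ m < k, ∑ i ∈ Finset.univ.filter (fun i : Fin N => (i : ℕ) < m), β i < ξ) :
    ∀ S : Finset (Fin N), ξ ≤ ∑ i ∈ S, β i → k ≤ S.card := by
  intro S hSξ
  by_contra hlt
  push_neg at hlt
  have hm : S.card ≤ N := le_trans hlt.le hkN
  have := aux_top_sum β hsorted S rfl hm
  have := hmin S.card hlt
  linarith
end

section
/- Let S and A be nonempty finite types (states and actions). Let p : S → A → S → ℝ be a transition kernel with p s a s' ≥ 0 and Σ_{s'} p s a s' = 1; let π : S → A → ℝ be a policy with π s a > 0 and Σ_a π s a = 1; let r : S → A → ℝ, δ ≥ 0, and 0 ≤ γ < 1. Define (T Q)(s, a) = r s a + γ * Σ_{s'} p s a s' * Σ_{a'} π s' a' * (Q s' a' − δ * log (π s' a')). If Q : S → A → ℝ is a fixed point of T (T Q = Q), then for all s, a: |Q s a| ≤ (R + γ * δ * log |A|) / (1 − γ), where R = sup_{s,a} |r s a| and |A| is the cardinality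 of A. In particular, the individual soft Q-value function is bounded. -/
open Finset

/-- Entropy bound: for a positive probability vector, `∑ w a * (- log (w a)) ≤ log (card A)`. -/
lemma entropy_le_log_card {A : Type*} [Fintype A] [Nonempty A]
    (w : A → ℝ) (hw0 : ∀ a, 0 < w a) (hw1 : ∑ a, w a = 1) :
    ∑ a, w a * (- Real.log (w a)) ≤ Real.log (Fintype.card A) := by
  have h := strictConcaveOn_log_Ioi.concaveOn.le_map_sum
      (t := Finset.univ) (w := w) (p := fun a => (w a)⁻¹)
      (fun a _ => (hw0 a).le) hw1 (fun a _ => Set.mem_Ioi.mpr (inv_pos.mpr (hw0 a)))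
  have hsum : ∑ a, w a • (w a)⁻¹ = (Fintype.card A : ℝ) := by
    simp only [smul_eq_mul]
    rw [Finset.sum_congr rfl (fun a _ => mul_inv_cancel₀ (hw0 a).ne')]
    rw [Finset.sum_const, Finset.card_univ, nsmul_eq_mul, mul_one]
  calc ∑ a, w a * (- Real.log (w a))
      = ∑ a, w a • Real.log ((w a)⁻¹) := by
        simp [Real.log_inv, smul_eq_mul]
    _ ≤ Real.log (∑ a, w a • (w a)⁻¹) := h
    _ = Real.log (Fintype.card A) := by rw [hsum]

theorem soft_qvalue_bounded
    {S A : Type*} [Fintype S] [Fintype A] [Nonempty S] [Nonempty A]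
    (p : S → A → S → ℝ) (hp0 : ∀ s a s', 0 ≤ p s a s')
    (hp1 : ∀ s a, ∑ s', p s a s' = 1)
    (π : S → A → ℝ) (hπ0 : ∀ s a, 0 < π s a) (hπ1 : ∀ s, ∑ a, π s a = 1)
    (r : S → A → ℝ) (δ : ℝ) (hδ : 0 ≤ δ)
    (γ : ℝ) (hγ0 : 0 ≤ γ) (hγ1 : γ < 1)
    (T : (S → A → ℝ) → S → A → ℝ)
    (hT : ∀ Q s a, T Q s a
      = r s a + γ * ∑ s', p s a s' *
          ∑ a', π s' a' * (Q s' a' - δ * Real.log (π s' a')))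
    (Q : S → A → ℝ) (hfix : T Q = Q) (s : S) (a : A) :
    |Q s a| ≤ ((⨆ sa : S × A, |r sa.1 sa.2|) + γ * δ * Real.log (Fintype.card A))
        / (1 - γ) := by
  set R : ℝ := ⨆ sa : S × A, |r sa.1 sa.2| with hR
  set M : ℝ := ⨆ sa : S × A, |Q sa.1 sa.2| with hM
  set L : ℝ := Real.log (Fintype.card A) with hL
  have hL0 : 0 ≤ L := Real.log_nonneg (by exact_mod_cast Fintype.card_pos)
  have hbddr : BddAbove (Set.range fun sa : S × A => |r sa.1 sa.2|) :=
    (Set.finite_range _).bddAbove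
  have hbddq : BddAbove (Set.range fun sa : S × A => |Q sa.1 sa.2|) :=
    (Set.finite_range _).bddAbove
  have hrR : ∀ s a, |r s a| ≤ R := fun s a => le_ciSup hbddr (s, a)
  have hqM : ∀ s a, |Q s a| ≤ M := fun s a => le_ciSup hbddq (s, a)
  have hπle1 : ∀ s a, π s a ≤ 1 := by
    intro s a
    rw [← hπ1 s]
    exact Finset.single_le_sum (fun a' _ => (hπ0 s a').le) (Finset.mem_univ a)
  -- inner sum bound
  have hinner : ∀ s', |∑ a', π s' a' * (Q s' a' - δ * Real.log (π s' a'))|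
      ≤ M + δ * L := by
    intro s'
    calc |∑ a', π s' a' * (Q s' a' - δ * Real.log (π s' a'))|
        ≤ ∑ a', |π s' a' * (Q s' a' - δ * Real.log (π s' a'))| :=
          Finset.abs_sum_le_sum_abs _ _
      _ = ∑ a', π s' a' * |Q s' a' - δ * Real.log (π s' a')| := by
          refine Finset.sum_congr rfl fun a' _ => ?_
          rw [abs_mul, abs_of_pos (hπ0 s' a')]
      _ ≤ ∑ a', π s' a' * (M + δ * (- Real.log (π s' a'))) := by
          refine Finset.sum_le_sum fun a' _ => ?_
          refine mul_le_mul_of_nonneg_left ?_ (hπ0 s' a').le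
          have hlog : Real.log (π s' a') ≤ 0 :=
            Real.log_nonpos (hπ0 s' a').le (hπle1 s' a')
          calc |Q s' a' - δ * Real.log (π s' a')|
              ≤ |Q s' a'| + |δ * Real.log (π s' a')| := abs_sub _ _
            _ ≤ M + δ * (- Real.log (π s' a')) := by
                rw [abs_mul, abs_of_nonneg hδ, abs_of_nonpos hlog]
                exact add_le_add (hqM s' a') le_rfl
      _ = (∑ a', π s' a') * M + δ * ∑ a', π s' a' * (- Real.log (π s' a')) := by
          rw [Finset.sum_mul, Finset.mul_sum]
          rw [← Finset.sum_add_distrib]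
          refine Finset.sum_congr rfl fun a' _ => ?_
          ring
      _ ≤ M + δ * L := by
          rw [hπ1 s', one_mul]
          exact add_le_add le_rfl
            (mul_le_mul_of_nonneg_left
              (entropy_le_log_card (π s') (hπ0 s') (hπ1 s')) hδ)
  -- pointwise bound
  have hpt : ∀ s a, |Q s a| ≤ R + γ * (M + δ * L) := by
    intro s a
    have hq : Q s a = r s a + γ * ∑ s', p s a s' *
        ∑ a', π s' a' * (Q s' a' - δ * Real.log (π s' a')) := by
      rw [← hT Q s a, hfix]
    rw [hq]
    have houter : |∑ s', p s a s' *
        ∑ a', π s' a' * (Q s' a' - δ * Real.log (π s' a'))| ≤ M + δ * L := by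
      calc |∑ s', p s a s' * ∑ a', π s' a' * (Q s' a' - δ * Real.log (π s' a'))|
          ≤ ∑ s', |p s a s' * ∑ a', π s' a' * (Q s' a' - δ * Real.log (π s' a'))| :=
            Finset.abs_sum_le_sum_abs _ _
        _ ≤ ∑ s', p s a s' * (M + δ * L) := by
            refine Finset.sum_le_sum fun s' _ => ?_
            rw [abs_mul, abs_of_nonneg (hp0 s a s')]
            exact mul_le_mul_of_nonneg_left (hinner s') (hp0 s a s')
        _ = M + δ * L := by rw [← Finset.sum_mul, hp1 s a, one_mul]
    calc |r s a + γ * ∑ s', p s a s' *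
          ∑ a', π s' a' * (Q s' a' - δ * Real.log (π s' a'))|
        ≤ |r s a| + |γ * ∑ s', p s a s' *
          ∑ a', π s' a' * (Q s' a' - δ * Real.log (π s' a'))| := abs_add_le _ _
      _ ≤ R + γ * (M + δ * L) := by
          refine add_le_add (hrR s a) ?_
          rw [abs_mul, abs_of_nonneg hγ0]
          exact mul_le_mul_of_nonneg_left houter hγ0
  have hMle : M ≤ R + γ * (M + δ * L) :=
    ciSup_le fun sa => hpt sa.1 sa.2
  have h1γ : 0 < 1 - γ := by linarith
  have hfinal : M ≤ (R + γ * δ * L) / (1 - γ) := by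
    rw [le_div_iff₀ h1γ]
    nlinarith [hMle]
  exact (hqM s a).trans hfinal
end
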